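/- arXiv:0901.4286 — 3 statements merged into one kernel-verified Lean document; each statement's English description precedes it below -/
import Mathlib

section
/- Let σ ∈ ℝ, λ ∈ ℂ, and let v : ℝ³ → ℂ³ be a Schwartz function, not identically zero, such that every component satisfies pointwise on ℝ³ the eigenvalue equation Δv(y) − (1/2)⟨y, ∇v(y)⟩ − (1/2)v(y) − σ·(y₁ ∂₂v(y) − y₂ ∂₁v(y)) = λ v(y). Then Re λ ≤ −1/2; in particular Re λ < 0 for every σ ∈ ℝ, so the operator B* − (1/2)I − σ D_μ has no eigenvalue on the imaginary axis and an Andronov–Hopf bifurcation from the zero solution of the blow-up rescaled Navier–Stokes equations is impossible. -/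
open Real

/-- Partial derivative `∂_j f` along the `j`-th coordinate direction. -/
noncomputable def pd {N : ℕ} {F : Type*} [NormedAddCommGroup F] [NormedSpace ℝ F]
    (f : (Fin N → ℝ) → F) (j : Fin N) (x : Fin N → ℝ) : F :=
  deriv (fun s => f (Function.update x j s)) (x j)

/-!
A maximum principle. The Schwartz function `|v|² = ∑ᵢ |vᵢ|²` vanishes at infinity, so it attains
a positive maximum at some `x`. Pair the eigenvalue equation with `v x` (real inner product on `ℂ`,
summed over components): the drift `⟨y, ∇⟩` and the swirl `y₁ ∂₂ − y₂ ∂₁` become first derivatives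
of `|v|² / 2`, which vanish at `x`, while `Re ⟨v, Δv⟩ ≤ 0` there by the second derivative test
along the coordinate lines. What is left is `Re λ · |v x|² ≤ -(1/2) · |v x|²`.
-/

open Filter Topology
open scoped InnerProductSpace SchwartzMap

theorem IsLocalMax.deriv_deriv_nonpos {f : ℝ → ℝ} {x : ℝ} (hmax : IsLocalMax f x)
    (hc : ContinuousAt f x) : deriv (deriv f) x ≤ 0 := by
  by_contra! hpos
  -- Otherwise `x` is also a local minimum, so `f` is locally constant near `x`.
  have hmin := isLocalMin_of_deriv_deriv_pos hpos hmax.deriv_eq_zero hc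
  have hconst : f =ᶠ[𝓝 x] fun _ => f x :=
    (hmax.and hmin).mono fun _ hy => le_antisymm hy.1 hy.2
  have : deriv (deriv f) x = 0 := by simpa using hconst.deriv.deriv_eq
  exact hpos.ne' this

section SumNormSq

variable {ι E : Type*} [Fintype ι] [NormedAddCommGroup E] [InnerProductSpace ℝ E]

theorem IsLocalMax.sum_inner_deriv_eq_zero_and_sum_inner_deriv_deriv_nonpos {F : ι → ℝ → E}
    {t : ℝ} (hF : ∀ i, ContDiff ℝ 2 (F i)) (hmax : IsLocalMax (fun s => ∑ i, ‖F i s‖ ^ 2) t) :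
    ∑ i, ⟪F i t, deriv (F i) t⟫_ℝ = 0 ∧ ∑ i, ⟪F i t, deriv (deriv (F i)) t⟫_ℝ ≤ 0 := by
  have hd : ∀ i, Differentiable ℝ (F i) := fun i => (hF i).differentiable two_ne_zero
  have hd' : ∀ i, Differentiable ℝ (deriv (F i)) := fun i => (hF i).differentiable_deriv_two
  have hderiv : ∀ s, HasDerivAt (fun s => ∑ i, ‖F i s‖ ^ 2)
      (∑ i, 2 * ⟪F i s, deriv (F i) s⟫_ℝ) s := fun s =>
    HasDerivAt.fun_sum fun i _ => (hd i s).hasDerivAt.norm_sq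
  have hderiv2 : HasDerivAt (deriv fun s => ∑ i, ‖F i s‖ ^ 2)
      (∑ i, 2 * (⟪F i t, deriv (deriv (F i)) t⟫_ℝ + ⟪deriv (F i) t, deriv (F i) t⟫_ℝ)) t := by
    rw [funext fun s => (hderiv s).deriv]
    exact HasDerivAt.fun_sum fun i _ =>
      ((hd i t).hasDerivAt.inner ℝ (hd' i t).hasDerivAt).const_mul 2
  have h1 := hmax.deriv_eq_zero
  have h2 := hmax.deriv_deriv_nonpos (hderiv t).continuousAt
  rw [(hderiv t).deriv, ← Finset.mul_sum] at h1
  rw [hderiv2.deriv, ← Finset.mul_sum, Finset.sum_add_distrib] at h2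
  have hsq : 0 ≤ ∑ i, ⟪deriv (F i) t, deriv (F i) t⟫_ℝ :=
    Finset.sum_nonneg fun i _ => real_inner_self_nonneg
  exact ⟨by simpa using h1, by linarith⟩

theorem IsLocalMax.sum_inner_pd_eq_zero_and_sum_inner_pd_pd_nonpos {n : ℕ}
    {f : ι → (Fin n → ℝ) → E} {x : Fin n → ℝ} (hf : ∀ i, ContDiff ℝ 2 (f i))
    (hmax : IsLocalMax (fun y => ∑ i, ‖f i y‖ ^ 2) x) (j : Fin n) :
    ∑ i, ⟪f i x, pd (f i) j x⟫_ℝ = 0 ∧ ∑ i, ⟪f i x, pd (pd (f i) j) j x⟫_ℝ ≤ 0 := by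
  have hslice : IsLocalMax (fun s => ∑ i, ‖f i (Function.update x j s)‖ ^ 2) (x j) := by
    rw [← Function.update_eq_self j x] at hmax
    exact hmax.comp_continuous (continuous_const.update j continuous_id).continuousAt
  have hpd2 : ∀ i,
      pd (pd (f i) j) j x = deriv (deriv fun s => f i (Function.update x j s)) (x j) := by
    intro i
    unfold pd
    congr 1
    funext s
    simp only [Function.update_idem, Function.update_self]
  obtain ⟨h1, h2⟩ := hslice.sum_inner_deriv_eq_zero_and_sum_inner_deriv_deriv_nonpos
    (F := fun i s => f i (Function.update x j s)) fun i => (hf i).comp (contDiff_update 2 x j)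
  simp only [Function.update_eq_self] at h1 h2
  exact ⟨h1, by simpa only [hpd2] using h2⟩

end SumNormSq

theorem SchwartzMap.exists_forall_sum_norm_sq_le {V F ι : Type*} [Fintype ι]
    [NormedAddCommGroup V] [NormedSpace ℝ V] [ProperSpace V]
    [NormedAddCommGroup F] [NormedSpace ℝ F] (v : 𝓢(V, ι → F)) (hv : v ≠ 0) :
    ∃ x, 0 < ∑ i, ‖v x i‖ ^ 2 ∧ ∀ y, ∑ i, ‖v y i‖ ^ 2 ≤ ∑ i, ‖v x i‖ ^ 2 := by
  set g := fun y => ∑ i, ‖v y i‖ ^ 2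
  have hg : Continuous g := by fun_prop
  have hg0 : Tendsto g (cocompact V) (𝓝 0) := by
    simpa using tendsto_finsetSum _ fun i _ =>
      (((continuous_apply i).tendsto 0).comp v.tendsto_cocompact).norm.pow 2
  obtain ⟨y, hy⟩ : ∃ y, v y ≠ 0 := by
    by_contra! h
    exact hv (SchwartzMap.ext h)
  obtain ⟨i, hi⟩ := Function.ne_iff.mp hy
  have hgy : 0 < g y := (pow_pos (norm_pos_iff.mpr hi) 2).trans_le
    (Finset.single_le_sum (f := fun i => ‖v y i‖ ^ 2) (fun i _ => by positivity)
      (Finset.mem_univ i))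
  obtain ⟨x, hx⟩ := hg.exists_forall_ge' y ((hg0.eventually_lt_const hgy).mono fun _ => le_of_lt)
  exact ⟨x, hgy.trans_le (hx y), hx⟩

namespace Complex

theorem inner_ofReal_mul_right (z w : ℂ) (r : ℝ) : ⟪z, r * w⟫_ℝ = r * ⟪z, w⟫_ℝ := by
  rw [← real_smul, real_inner_smul_right]

theorem inner_mul_self_right (z w : ℂ) : ⟪z, w * z⟫_ℝ = w.re * ‖z‖ ^ 2 := by
  rw [Complex.inner, mul_assoc, mul_conj, normSq_eq_norm_sq, re_mul_ofReal]

end Complex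

/-- Proposition 7.1: the linearization `B* - (1/2)I - σ D_μ` of the blow-up rescaled
Navier--Stokes equations about the zero solution has no eigenvalue with real part `> -1/2`;
in particular no eigenvalue on the imaginary axis, so an Andronov--Hopf bifurcation from `0`
is impossible. -/
theorem no_andronov_hopf_from_zero (sig : ℝ) (lam : ℂ)
    (v : SchwartzMap (Fin 3 → ℝ) (Fin 3 → ℂ)) (hv : v ≠ 0)
    (heig : ∀ y : Fin 3 → ℝ, ∀ i : Fin 3,
      (∑ j, pd (pd (fun z => v z i) j) j y)
        - (1 / 2 : ℂ) * ∑ j, (y j : ℂ) * pd (fun z => v z i) j y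
        - (1 / 2 : ℂ) * v y i
        - (sig : ℂ) * ((y 0 : ℂ) * pd (fun z => v z i) 1 y
            - (y 1 : ℂ) * pd (fun z => v z i) 0 y)
        = lam * v y i) :
    lam.re ≤ -(1 / 2) ∧ lam.re < 0 := by
  obtain ⟨x, hpos, hmax⟩ := v.exists_forall_sum_norm_sq_le hv
  have hcrit := IsLocalMax.sum_inner_pd_eq_zero_and_sum_inner_pd_pd_nonpos
    (f := fun i z => v z i) (fun i => contDiff_pi.mp (v.smooth 2) i)
    (Eventually.of_forall hmax)
  have hpair : ∀ i, lam.re * ‖v x i‖ ^ 2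
      = (∑ j, ⟪v x i, pd (pd (fun z => v z i) j) j x⟫_ℝ)
        - 1 / 2 * ∑ j, x j * ⟪v x i, pd (fun z => v z i) j x⟫_ℝ
        - 1 / 2 * ‖v x i‖ ^ 2
        - sig * (x 0 * ⟪v x i, pd (fun z => v z i) 1 x⟫_ℝ
            - x 1 * ⟪v x i, pd (fun z => v z i) 0 x⟫_ℝ) := by
    intro i
    have h := congrArg (⟪v x i, ·⟫_ℝ) (heig x i)
    rw [show (1 / 2 : ℂ) = ((1 / 2 : ℝ) : ℂ) by push_cast; rfl] at h
    simp only [inner_sub_right, inner_sum, Complex.inner_ofReal_mul_right,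
      Complex.inner_mul_self_right, Complex.ofReal_re] at h
    exact h.symm
  have hle : lam.re * ∑ i, ‖v x i‖ ^ 2 ≤ -(1 / 2) * ∑ i, ‖v x i‖ ^ 2 := by
    obtain ⟨⟨hgrad0, hhess0⟩, ⟨hgrad1, hhess1⟩, ⟨hgrad2, hhess2⟩⟩ := hcrit 0, hcrit 1, hcrit 2
    have k0 := hpair 0
    have k1 := hpair 1
    have k2 := hpair 2
    simp only [Fin.sum_univ_three] at k0 k1 k2 hgrad0 hgrad1 hgrad2 hhess0 hhess1 hhess2 ⊢
    linear_combination k0 + k1 + k2 - (1 / 2 * x 0) * hgrad0 - (1 / 2 * x 1) * hgrad1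
      - (1 / 2 * x 2) * hgrad2 - (sig * x 0) * hgrad1 + (sig * x 1) * hgrad0
      + hhess0 + hhess1 + hhess2
  have hre : lam.re ≤ -(1 / 2) := le_of_mul_le_mul_right hle hpos
  exact ⟨hre, by linarith⟩
end

section
/- Maximum-principle identity for Leray's rescaled stationary Navier–Stokes system: let Ω ⊆ ℝ³ be open, U : Ω → ℝ³ of class C³ and P : Ω → ℝ of class C², satisfying (1/2)U + (1/2)(y·∇)U + (U·∇)U = −∇P + ΔU and div U = 0 on Ω. Then the head-pressure function Π := (1/2)|U|² + (1/2)⟨y, U⟩ + P satisfies the pointwise identity −ΔΠ + ⟨U + y/2, ∇Π⟩ = −|curl U|² on Ω; in particular −ΔΠ + ⟨U + y/2, ∇Π⟩ ≤ 0, so Π obeys an elliptic maximum principle. -/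
open Real Set

/-!
Eliminating `∇P` with the momentum equation gives `∂ₖΠ = Σᵢ (Uᵢ + yᵢ/2) ωₖᵢ + ΔUₖ`, where
`ωₖᵢ = ∂ₖUᵢ - ∂ᵢUₖ`. Pairing with `U + y/2` kills the antisymmetric part, leaving
`⟨U + y/2, ΔU⟩`. Differentiating once more, `div U = 0` together with the symmetry of second and
third derivatives removes `Σₖ ∂ₖ∂ᵢUₖ` and `Σₖ ∂ₖΔUₖ`, so `ΔΠ = ½ Σ ωₖᵢ² + ⟨U + y/2, ΔU⟩`.
The difference is `-½ Σ ωₖᵢ² = -|curl U|²`.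
-/

open Filter Topology

section PartialDerivative

variable {N : ℕ} {F : Type*} [NormedAddCommGroup F] [NormedSpace ℝ F] {x : Fin N → ℝ}

theorem tendsto_update_nhds (x : Fin N → ℝ) (j : Fin N) :
    Tendsto (Function.update x j) (𝓝 (x j)) (𝓝 x) := by
  simpa using (hasDerivAt_update x j (x j)).continuousAt.tendsto

theorem Filter.EventuallyEq.pd_eq {f g : (Fin N → ℝ) → F} (h : f =ᶠ[𝓝 x] g) (j : Fin N) :
    pd f j x = pd g j x :=
  (h.comp_tendsto (tendsto_update_nhds x j)).deriv_eq

theorem DifferentiableAt.hasDerivAt_comp_update {f : (Fin N → ℝ) → F}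
    (hf : DifferentiableAt ℝ f x) (j : Fin N) :
    HasDerivAt (fun s => f (Function.update x j s)) (fderiv ℝ f x (Pi.single j 1)) (x j) := by
  rw [← Function.update_eq_self j x] at hf
  simpa [Function.comp_def] using hf.hasFDerivAt.comp_hasDerivAt (x j) (hasDerivAt_update x j (x j))

theorem DifferentiableAt.differentiableAt_comp_update {f : (Fin N → ℝ) → F}
    (hf : DifferentiableAt ℝ f x) (j : Fin N) :
    DifferentiableAt ℝ (fun s => f (Function.update x j s)) (x j) :=
  (hf.hasDerivAt_comp_update j).differentiableAt

theorem pd_eq_fderiv {f : (Fin N → ℝ) → F} (hf : DifferentiableAt ℝ f x) (j : Fin N) :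
    pd f j x = fderiv ℝ f x (Pi.single j 1) :=
  (hf.hasDerivAt_comp_update j).deriv

variable {f g : (Fin N → ℝ) → ℝ}

theorem pd_add (hf : DifferentiableAt ℝ f x) (hg : DifferentiableAt ℝ g x) (j : Fin N) :
    pd (fun z => f z + g z) j x = pd f j x + pd g j x :=
  deriv_fun_add (hf.differentiableAt_comp_update j) (hg.differentiableAt_comp_update j)

theorem pd_sub (hf : DifferentiableAt ℝ f x) (hg : DifferentiableAt ℝ g x) (j : Fin N) :
    pd (fun z => f z - g z) j x = pd f j x - pd g j x :=
  deriv_fun_sub (hf.differentiableAt_comp_update j) (hg.differentiableAt_comp_update j)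

theorem pd_mul (hf : DifferentiableAt ℝ f x) (hg : DifferentiableAt ℝ g x) (j : Fin N) :
    pd (fun z => f z * g z) j x = pd f j x * g x + f x * pd g j x := by
  simp only [pd, Function.update_eq_self,
    deriv_fun_mul (hf.differentiableAt_comp_update j) (hg.differentiableAt_comp_update j)]

theorem pd_const_mul (c : ℝ) (f : (Fin N → ℝ) → ℝ) (j : Fin N) :
    pd (fun z => c * f z) j x = c * pd f j x :=
  congrFun (deriv_const_mul_field' c) (x j)

theorem pd_div_const (f : (Fin N → ℝ) → ℝ) (c : ℝ) (j : Fin N) :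
    pd (fun z => f z / c) j x = pd f j x / c :=
  deriv_div_const c

theorem pd_sum {ι : Type*} (s : Finset ι) {f : ι → (Fin N → ℝ) → ℝ}
    (hf : ∀ i ∈ s, DifferentiableAt ℝ (f i) x) (j : Fin N) :
    pd (fun z => ∑ i ∈ s, f i z) j x = ∑ i ∈ s, pd (f i) j x :=
  deriv_fun_sum fun i hi => (hf i hi).differentiableAt_comp_update j

theorem pd_apply (i j : Fin N) : pd (fun z => z i) j x = (Pi.single j 1 : Fin N → ℝ) i :=
  (hasDerivAt_pi.1 (hasDerivAt_update x j (x j)) i).deriv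

end PartialDerivative

section Smoothness

variable {N : ℕ} {Ω : Set (Fin N → ℝ)} {f : (Fin N → ℝ) → ℝ} {x : Fin N → ℝ}

theorem pd_eqOn_fderiv (hΩ : IsOpen Ω) (hf : DifferentiableOn ℝ f Ω) (j : Fin N) :
    EqOn (pd f j) (fun z => fderiv ℝ f z (Pi.single j 1)) Ω :=
  fun _ hz => pd_eq_fderiv (hf.differentiableAt (hΩ.mem_nhds hz)) j

theorem ContDiffOn.pd {m n : WithTop ℕ∞} (hΩ : IsOpen Ω) (hf : ContDiffOn ℝ n f Ω)
    (hmn : m + 1 ≤ n) (j : Fin N) : ContDiffOn ℝ m (pd f j) Ω := by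
  have hf' : DifferentiableOn ℝ f Ω :=
    hf.differentiableOn (one_pos.trans_le (le_add_self.trans hmn)).ne'
  exact ((hf.fderiv_of_isOpen hΩ hmn).clm_apply contDiffOn_const).congr (pd_eqOn_fderiv hΩ hf' j)

theorem pd_pd_eq_fderiv_fderiv (hΩ : IsOpen Ω) (hf : ContDiffOn ℝ 2 f Ω) (hx : x ∈ Ω)
    (j k : Fin N) :
    pd (pd f j) k x = fderiv ℝ (fderiv ℝ f) x (Pi.single k 1) (Pi.single j 1) := by
  have hd : DifferentiableAt ℝ (fderiv ℝ f) x :=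
    ((hf.fderiv_of_isOpen hΩ (m := 1) (by norm_num)).differentiableOn one_ne_zero).differentiableAt
      (hΩ.mem_nhds hx)
  rw [((pd_eqOn_fderiv hΩ (hf.differentiableOn (by norm_num)) j).eventuallyEq_of_mem
      (hΩ.mem_nhds hx)).pd_eq,
    pd_eq_fderiv (hd.clm_apply (differentiableAt_const _)) k,
    fderiv_clm_apply hd (differentiableAt_const _)]
  simp

theorem pd_pd_comm (hΩ : IsOpen Ω) (hf : ContDiffOn ℝ 2 f Ω) (hx : x ∈ Ω) (j k : Fin N) :
    pd (pd f j) k x = pd (pd f k) j x := by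
  rw [pd_pd_eq_fderiv_fderiv hΩ hf hx, pd_pd_eq_fderiv_fderiv hΩ hf hx]
  exact ((hf.contDiffAt (hΩ.mem_nhds hx)).isSymmSndFDerivAt (by simp)).eq _ _

theorem pd_pd_pd_comm (hΩ : IsOpen Ω) (hf : ContDiffOn ℝ 3 f Ω) (hx : x ∈ Ω) (a b c : Fin N) :
    pd (pd (pd f a) b) c x = pd (pd (pd f c) a) b x := by
  rw [pd_pd_comm hΩ (hf.pd hΩ (m := 2) (by norm_num) a) hx b c]
  exact (Filter.eventuallyEq_of_mem (hΩ.mem_nhds hx) fun z hz =>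
    pd_pd_comm hΩ (hf.of_le (by norm_num)) hz a c).pd_eq b

theorem sum_pd_eq_zero_of_sum_eq_zero {ι : Type*} [Fintype ι] {f : ι → (Fin N → ℝ) → ℝ}
    (hΩ : IsOpen Ω) (hf : ∀ k, DifferentiableOn ℝ (f k) Ω) (h : ∀ x ∈ Ω, ∑ k, f k x = 0)
    (j : Fin N) : ∀ x ∈ Ω, ∑ k, pd (f k) j x = 0 := by
  intro x hx
  rw [← pd_sum _ fun k _ => (hf k).differentiableAt (hΩ.mem_nhds hx),
    (Filter.eventuallyEq_of_mem (hΩ.mem_nhds hx) h).pd_eq]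
  simp [pd]

end Smoothness

section Antisymmetric

variable {ι R : Type*} [Fintype ι] [CommRing R]

theorem two_mul_sum_sum_mul_sub_transpose (a : ι → ι → R) :
    2 * ∑ i, ∑ k, a i k * (a i k - a k i) = ∑ i, ∑ k, (a i k - a k i) ^ 2 := by
  have hswap : ∑ i, ∑ k, a k i * (a i k - a k i) = -∑ i, ∑ k, a i k * (a i k - a k i) := by
    rw [Finset.sum_comm]
    simp only [← Finset.sum_neg_distrib]
    exact Finset.sum_congr rfl fun i _ => Finset.sum_congr rfl fun k _ => by ring
  have hsq : ∑ i, ∑ k, (a i k - a k i) ^ 2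
      = ∑ i, ∑ k, a i k * (a i k - a k i) - ∑ i, ∑ k, a k i * (a i k - a k i) := by
    simp only [← Finset.sum_sub_distrib]
    exact Finset.sum_congr rfl fun i _ => Finset.sum_congr rfl fun k _ => by ring
  rw [hsq, hswap]
  ring

theorem sum_mul_sum_mul_sub_transpose (v : ι → R) (a : ι → ι → R) :
    ∑ j, v j * ∑ i, v i * (a i j - a j i) = 0 := by
  simp only [Finset.mul_sum, mul_sub, Finset.sum_sub_distrib, sub_eq_zero]
  rw [Finset.sum_comm]
  exact Finset.sum_congr rfl fun i _ => Finset.sum_congr rfl fun j _ => by ring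

end Antisymmetric

section Leray

variable {N : ℕ} {Ω : Set (Fin N → ℝ)} {U : (Fin N → ℝ) → Fin N → ℝ} {P : (Fin N → ℝ) → ℝ}
  {x : Fin N → ℝ}

noncomputable def headPressure (U : (Fin N → ℝ) → Fin N → ℝ) (P : (Fin N → ℝ) → ℝ) :
    (Fin N → ℝ) → ℝ :=
  fun y => (1/2) * ∑ i, (U y i)^2 + (1/2) * ∑ i, y i * U y i + P y

def LerayEquationAt (U : (Fin N → ℝ) → Fin N → ℝ) (P : (Fin N → ℝ) → ℝ) (y : Fin N → ℝ) :
    Prop :=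
  ∀ i, (1/2) * U y i + (1/2) * ∑ j, y j * pd (fun z => U z i) j y
      + ∑ j, U y j * pd (fun z => U z i) j y
    = - pd P i y + ∑ j, pd (pd (fun z => U z i) j) j y

theorem pd_headPressure (hU : DifferentiableAt ℝ U x) (hP : DifferentiableAt ℝ P x)
    (k : Fin N) :
    pd (headPressure U P) k x
      = ∑ i, (U x i + x i / 2) * pd (fun z => U z i) k x + U x k / 2 + pd P k x := by
  have hUi : ∀ i, DifferentiableAt ℝ (fun z => U z i) x := differentiableAt_pi.1 hU
  have hk : U x k / 2 = ∑ i, (if i = k then U x i else 0) / 2 := by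
    rw [← Finset.sum_div]
    simp
  unfold headPressure
  simp only [sq]
  rw [pd_add, pd_add, pd_const_mul, pd_const_mul, pd_sum, pd_sum]
  · simp (disch := fun_prop) only [pd_mul, pd_apply]
    rw [hk, ← Finset.sum_add_distrib, Finset.mul_sum, Finset.mul_sum, ← Finset.sum_add_distrib]
    congr 1
    refine Finset.sum_congr rfl fun i _ => ?_
    simp only [Pi.single_apply]
    split_ifs <;> ring
  all_goals fun_prop

theorem pd_headPressure_of_lerayEquationAt (hU : DifferentiableAt ℝ U x)
    (hP : DifferentiableAt ℝ P x) (hL : LerayEquationAt U P x) (k : Fin N) :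
    pd (headPressure U P) k x
      = ∑ i, (U x i + x i / 2) * (pd (fun z => U z i) k x - pd (fun z => U z k) i x)
        + ∑ j, pd (pd (fun z => U z k) j) j x := by
  have hk := hL k
  simp only [Finset.mul_sum, one_div, ← div_eq_inv_mul] at hk
  simp only [pd_headPressure hU hP, mul_sub, add_mul, Finset.sum_sub_distrib,
    Finset.sum_add_distrib, div_mul_eq_mul_div]
  linarith

theorem pd_pd_headPressure (hΩ : IsOpen Ω) (hU : ContDiffOn ℝ 3 U Ω)
    (hP : DifferentiableOn ℝ P Ω) (hL : ∀ x ∈ Ω, LerayEquationAt U P x) (hx : x ∈ Ω)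
    (k : Fin N) :
    pd (pd (headPressure U P) k) k x
      = ∑ i, (pd (fun z => U z i) k x * (pd (fun z => U z i) k x - pd (fun z => U z k) i x)
          + (U x i + x i / 2)
            * (pd (pd (fun z => U z i) k) k x - pd (pd (fun z => U z k) i) k x))
        + ∑ j, pd (pd (pd (fun z => U z k) j) j) k x := by
  have hUi : ∀ i, ContDiffOn ℝ 3 (fun z => U z i) Ω := contDiffOn_pi.1 hU
  have hU0 : ∀ i, DifferentiableAt ℝ (fun z => U z i) x := fun i =>
    ((hUi i).differentiableOn (by norm_num)).differentiableAt (hΩ.mem_nhds hx)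
  have hU1 : ∀ i j, DifferentiableAt ℝ (pd (fun z => U z i) j) x := fun i j =>
    (((hUi i).pd hΩ (m := 2) (by norm_num) j).differentiableOn (by norm_num)).differentiableAt
      (hΩ.mem_nhds hx)
  have hU2 : ∀ i j l, DifferentiableAt ℝ (pd (pd (fun z => U z i) j) l) x := fun i j l =>
    ((((hUi i).pd hΩ (m := 2) (by norm_num) j).pd hΩ (m := 1) (by norm_num) l).differentiableOn
      (by norm_num)).differentiableAt (hΩ.mem_nhds hx)
  have hnear : pd (headPressure U P) k =ᶠ[𝓝 x] fun y =>
      ∑ i, (U y i + y i / 2) * (pd (fun z => U z i) k y - pd (fun z => U z k) i y)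
        + ∑ j, pd (pd (fun z => U z k) j) j y :=
    Filter.eventuallyEq_of_mem (hΩ.mem_nhds hx) fun y hy =>
      pd_headPressure_of_lerayEquationAt
        ((hU.differentiableOn (by norm_num)).differentiableAt (hΩ.mem_nhds hy))
        (hP.differentiableAt (hΩ.mem_nhds hy)) (hL y hy) k
  rw [hnear.pd_eq, pd_add, pd_sum, pd_sum]
  · simp (disch := fun_prop) only [pd_mul, pd_add, pd_sub, pd_div_const, pd_apply]
    congr 1
    refine Finset.sum_congr rfl fun i _ => ?_
    rcases eq_or_ne i k with rfl | hik
    · simp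
    · simp [hik]
  all_goals fun_prop

theorem laplacian_headPressure (hΩ : IsOpen Ω) (hU : ContDiffOn ℝ 3 U Ω)
    (hP : DifferentiableOn ℝ P Ω) (hL : ∀ x ∈ Ω, LerayEquationAt U P x)
    (hdiv : ∀ x ∈ Ω, ∑ j, pd (fun z => U z j) j x = 0) (hx : x ∈ Ω) :
    ∑ k, pd (pd (headPressure U P) k) k x
      = (1 / 2) * ∑ i, ∑ k, (pd (fun z => U z i) k x - pd (fun z => U z k) i x) ^ 2
        + ∑ i, (U x i + x i / 2) * ∑ k, pd (pd (fun z => U z i) k) k x := by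
  have hUi : ∀ i, ContDiffOn ℝ 3 (fun z => U z i) Ω := contDiffOn_pi.1 hU
  have hdiv' : ∀ j, ∀ y ∈ Ω, ∑ k, pd (pd (fun z => U z k) k) j y = 0 := fun j =>
    sum_pd_eq_zero_of_sum_eq_zero hΩ
      (fun k => ((hUi k).pd hΩ (m := 2) (by norm_num) k).differentiableOn (by norm_num)) hdiv j
  have hdiv'' : ∀ j, ∑ k, pd (pd (pd (fun z => U z k) k) j) j x = 0 := fun j =>
    sum_pd_eq_zero_of_sum_eq_zero hΩ (fun k => (((hUi k).pd hΩ (m := 2) (by norm_num) k).pd hΩ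
      (m := 1) (by norm_num) j).differentiableOn (by norm_num)) (hdiv' j) j x hx
  have hvort : ∑ k, ∑ i, pd (fun z => U z i) k x
        * (pd (fun z => U z i) k x - pd (fun z => U z k) i x)
      = (1 / 2) * ∑ i, ∑ k, (pd (fun z => U z i) k x - pd (fun z => U z k) i x) ^ 2 := by
    rw [Finset.sum_comm, ← two_mul_sum_sum_mul_sub_transpose]
    ring
  have hsecond : ∑ k, ∑ i, (U x i + x i / 2)
        * (pd (pd (fun z => U z i) k) k x - pd (pd (fun z => U z k) i) k x)
      = ∑ i, (U x i + x i / 2) * ∑ k, pd (pd (fun z => U z i) k) k x := by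
    rw [Finset.sum_comm]
    refine Finset.sum_congr rfl fun i _ => ?_
    rw [← Finset.mul_sum, Finset.sum_sub_distrib]
    simp only [pd_pd_comm hΩ ((hUi _).of_le (by norm_num)) hx i, hdiv' i x hx, sub_zero]
  have hthird : ∑ k, ∑ j, pd (pd (pd (fun z => U z k) j) j) k x = 0 := by
    rw [Finset.sum_comm]
    refine Finset.sum_eq_zero fun j _ => ?_
    simp only [pd_pd_pd_comm hΩ (hUi _) hx j j]
    exact hdiv'' j
  simp only [pd_pd_headPressure hΩ hU hP hL hx, Finset.sum_add_distrib]
  linear_combination hvort + hsecond + hthird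

theorem neg_laplacian_add_drift_headPressure (hΩ : IsOpen Ω) (hU : ContDiffOn ℝ 3 U Ω)
    (hP : DifferentiableOn ℝ P Ω) (hL : ∀ x ∈ Ω, LerayEquationAt U P x)
    (hdiv : ∀ x ∈ Ω, ∑ j, pd (fun z => U z j) j x = 0) (hx : x ∈ Ω) :
    (- ∑ j, pd (pd (headPressure U P) j) j x)
        + ∑ j, (U x j + x j / 2) * pd (headPressure U P) j x
      = -((1 / 2) * ∑ i, ∑ k, (pd (fun z => U z i) k x - pd (fun z => U z k) i x) ^ 2) := by
  have hUx : DifferentiableAt ℝ U x :=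
    (hU.differentiableOn (by norm_num)).differentiableAt (hΩ.mem_nhds hx)
  simp only [laplacian_headPressure hΩ hU hP hL hdiv hx,
    pd_headPressure_of_lerayEquationAt hUx (hP.differentiableAt (hΩ.mem_nhds hx)) (hL x hx),
    mul_add, Finset.sum_add_distrib, sum_mul_sum_mul_sub_transpose]
  ring

end Leray

/-- Identity (2.13) (Nečas--Růžička--Šverák): for a solution `(U,P)` of Leray's rescaled
stationary Navier--Stokes system, the head pressure `Π = (1/2)|U|² + (1/2)⟨y,U⟩ + P`
satisfies `-ΔΠ + ⟨U + y/2, ∇Π⟩ = -|curl U|² ≤ 0`, hence obeys an elliptic maximum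
principle. -/
theorem leray_maximum_principle
    (Ω : Set (Fin 3 → ℝ)) (hΩ : IsOpen Ω)
    (U : (Fin 3 → ℝ) → Fin 3 → ℝ) (P : (Fin 3 → ℝ) → ℝ)
    (hU : ContDiffOn ℝ 3 U Ω) (hP : ContDiffOn ℝ 2 P Ω)
    (heq : ∀ y ∈ Ω, ∀ i : Fin 3,
      (1/2) * U y i + (1/2) * ∑ j, y j * pd (fun z => U z i) j y
          + ∑ j, U y j * pd (fun z => U z i) j y
        = - pd P i y + ∑ j, pd (pd (fun z => U z i) j) j y)
    (hdiv : ∀ y ∈ Ω, ∑ j, pd (fun z => U z j) j y = 0)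
    (Phead : (Fin 3 → ℝ) → ℝ)
    (hPhead : ∀ y, Phead y = (1/2) * ∑ i, (U y i)^2 + (1/2) * ∑ i, y i * U y i + P y) :
    ∀ y ∈ Ω,
      ((- ∑ j, pd (pd Phead j) j y) + ∑ j, (U y j + y j / 2) * pd Phead j y
        = - ((pd (fun z => U z 2) 1 y - pd (fun z => U z 1) 2 y)^2
            + (pd (fun z => U z 0) 2 y - pd (fun z => U z 2) 0 y)^2
            + (pd (fun z => U z 1) 0 y - pd (fun z => U z 0) 1 y)^2))
      ∧ (- ∑ j, pd (pd Phead j) j y) + ∑ j, (U y j + y j / 2) * pd Phead j y ≤ 0 := by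
  intro y hy
  obtain rfl : Phead = headPressure U P := funext hPhead
  have hcurl : (1 / 2) * ∑ i, ∑ k, (pd (fun z => U z i) k y - pd (fun z => U z k) i y) ^ 2
      = (pd (fun z => U z 2) 1 y - pd (fun z => U z 1) 2 y)^2
        + (pd (fun z => U z 0) 2 y - pd (fun z => U z 2) 0 y)^2
        + (pd (fun z => U z 1) 0 y - pd (fun z => U z 0) 1 y)^2 := by
    simp only [Fin.sum_univ_three]
    ring
  rw [neg_laplacian_add_drift_headPressure hΩ hU (hP.differentiableOn (by norm_num)) heq hdiv hy,
    hcurl]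
  exact ⟨rfl, neg_nonpos.2 (by positivity)⟩
end

section
/- Slezkin's integrability reduction: let I ⊆ ℝ be an open interval, ν ∈ ℝ, and f : I → ℝ of class C⁴. Then f satisfies Slezkin's fourth-order equation f f''' + 3 f' f'' = ν[(1 − τ²) f'''' − 4τ f'''] on I if and only if there exist constants C₀, C₁, C₂ ∈ ℝ such that (1/2) f(τ)² − ν[(1 − τ²) f'(τ) + 2τ f(τ)] = C₀ + C₁τ + C₂τ² for all τ ∈ I. The two key identities are (1/2)(f²)''' = f f''' + 3 f' f'' and ((1 − τ²) f' + 2τ f)''' = (1 − τ²) f'''' − 4τ f'''. -/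
/-!
Both sides of Slezkin's equation are exact third derivatives:
`f f''' + 3 f' f'' = (f²/2)'''` and `(1 - τ²) f'''' - 4τ f''' = ((1 - τ²) f' + 2τ f)'''`.
So the equation says that `f²/2 - ν((1 - τ²) f' + 2τ f)` has vanishing third derivative, and on
an interval this means exactly that it is a quadratic polynomial.
-/

open Set Topology

theorem IsOpen.forall_eq_iff_exists_eq_add_const {𝕜 G : Type*} [RCLike 𝕜] [NormedAddCommGroup G]
    [NormedSpace 𝕜 G] {s : Set 𝕜} (hs : IsOpen s) (hs' : IsPreconnected s)
    {g g' P P' : 𝕜 → G} (hg : ∀ t ∈ s, HasDerivAt g (g' t) t)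
    (hP : ∀ t ∈ s, HasDerivAt P (P' t) t) :
    (∀ t ∈ s, g' t = P' t) ↔ ∃ c, ∀ t ∈ s, g t = P t + c := by
  constructor
  · intro h
    refine hs.exists_eq_add_of_deriv_eq hs'
      (fun t ht => (hg t ht).differentiableAt.differentiableWithinAt)
      (fun t ht => (hP t ht).differentiableAt.differentiableWithinAt) fun t ht => ?_
    rw [(hg t ht).deriv, (hP t ht).deriv, h t ht]
  · rintro ⟨c, hc⟩ t ht
    have hg_eq : g =ᶠ[𝓝 t] fun u => P u + c := Filter.eventuallyEq_of_mem (hs.mem_nhds ht) hc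
    exact (hg t ht).unique (((hP t ht).add_const c).congr_of_eventuallyEq hg_eq)

theorem ContDiffOn.hasDerivAt_iterate_deriv {𝕜 F : Type*} [NontriviallyNormedField 𝕜]
    [NormedAddCommGroup F] [NormedSpace 𝕜 F] {n : WithTop ℕ∞} {f : 𝕜 → F} {s : Set 𝕜}
    (hf : ContDiffOn 𝕜 n f s) (hs : IsOpen s) {k : ℕ} (hk : k < n) {t : 𝕜} (ht : t ∈ s) :
    HasDerivAt (deriv^[k] f) (deriv^[k + 1] f t) t := by
  have hdiff : DifferentiableOn 𝕜 (deriv^[k] f) s :=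
    (hf.differentiableOn_iteratedDerivWithin hk hs.uniqueDiffOn).congr fun u hu =>
      (iteratedDerivWithin_of_isOpen_eq_iterate hs hu).symm
  rw [Function.iterate_succ_apply']
  exact (hdiff.differentiableAt (hs.mem_nhds ht)).hasDerivAt

structure HasDerivChainOn (s : Set ℝ) (g g₁ g₂ g₃ : ℝ → ℝ) : Prop where
  first : ∀ t ∈ s, HasDerivAt g (g₁ t) t
  second : ∀ t ∈ s, HasDerivAt g₁ (g₂ t) t
  third : ∀ t ∈ s, HasDerivAt g₂ (g₃ t) t

namespace HasDerivChainOn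

variable {s : Set ℝ} {g g₁ g₂ g₃ : ℝ → ℝ}

theorem sub {h h₁ h₂ h₃ : ℝ → ℝ} (hg : HasDerivChainOn s g g₁ g₂ g₃)
    (hh : HasDerivChainOn s h h₁ h₂ h₃) :
    HasDerivChainOn s (fun t => g t - h t) (fun t => g₁ t - h₁ t) (fun t => g₂ t - h₂ t)
      (fun t => g₃ t - h₃ t) :=
  ⟨fun t ht => (hg.first t ht).sub (hh.first t ht),
    fun t ht => (hg.second t ht).sub (hh.second t ht),
    fun t ht => (hg.third t ht).sub (hh.third t ht)⟩

theorem const_mul (c : ℝ) (hg : HasDerivChainOn s g g₁ g₂ g₃) :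
    HasDerivChainOn s (fun t => c * g t) (fun t => c * g₁ t) (fun t => c * g₂ t)
      (fun t => c * g₃ t) :=
  ⟨fun t ht => (hg.first t ht).const_mul c, fun t ht => (hg.second t ht).const_mul c,
    fun t ht => (hg.third t ht).const_mul c⟩

theorem deriv_deriv_deriv (hg : HasDerivChainOn s g g₁ g₂ g₃) (hs : IsOpen s) :
    ∀ t ∈ s, deriv (deriv (deriv g)) t = g₃ t := by
  have h₁ : EqOn (deriv g) g₁ s := fun t ht => (hg.first t ht).deriv
  have h₂ : EqOn (deriv (deriv g)) g₂ s :=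
    (h₁.deriv hs).trans fun t ht => (hg.second t ht).deriv
  exact fun t ht => (h₂.deriv hs ht).trans (hg.third t ht).deriv

theorem third_eq_zero_iff_exists_quadratic (hg : HasDerivChainOn s g g₁ g₂ g₃)
    (hs : IsOpen s) (hs' : IsPreconnected s) :
    (∀ t ∈ s, g₃ t = 0) ↔ ∃ C₀ C₁ C₂ : ℝ, ∀ t ∈ s, g t = C₀ + C₁ * t + C₂ * t ^ 2 := by
  have hlin (a t : ℝ) : HasDerivAt (fun t => a * t) a t := by
    simpa using (hasDerivAt_id t).const_mul a
  have hquad (a b t : ℝ) : HasDerivAt (fun t => a / 2 * t ^ 2 + b * t) (a * t + b) t :=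
    (((hasDerivAt_pow 2 t).const_mul (a / 2)).add (hlin b t)).congr_deriv (by norm_num; ring)
  calc (∀ t ∈ s, g₃ t = 0)
      ↔ ∃ c₂, ∀ t ∈ s, g₂ t = 0 + c₂ :=
        hs.forall_eq_iff_exists_eq_add_const hs' hg.third fun t _ => hasDerivAt_const t 0
    _ ↔ ∃ c₂ c₁, ∀ t ∈ s, g₁ t = c₂ * t + c₁ := exists_congr fun c₂ => by
        simpa only [zero_add] using
          hs.forall_eq_iff_exists_eq_add_const hs' hg.second fun t _ => hlin c₂ t
    _ ↔ ∃ c₂ c₁ c₀, ∀ t ∈ s, g t = c₂ / 2 * t ^ 2 + c₁ * t + c₀ :=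
        exists₂_congr fun c₂ c₁ =>
          hs.forall_eq_iff_exists_eq_add_const hs' hg.first fun t _ => hquad c₂ c₁ t
    _ ↔ ∃ C₀ C₁ C₂ : ℝ, ∀ t ∈ s, g t = C₀ + C₁ * t + C₂ * t ^ 2 := by
        constructor
        · rintro ⟨c₂, c₁, c₀, h⟩
          exact ⟨c₀, c₁, c₂ / 2, fun t ht => (h t ht).trans (by ring)⟩
        · rintro ⟨C₀, C₁, C₂, h⟩
          exact ⟨2 * C₂, C₁, C₀, fun t ht => (h t ht).trans (by ring)⟩

end HasDerivChainOn

theorem ContDiffOn.hasDerivChainOn_iterate_deriv {n : WithTop ℕ∞} {f : ℝ → ℝ} {s : Set ℝ}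
    (hf : ContDiffOn ℝ n f s) (hs : IsOpen s) {k : ℕ} (hk : k + 3 ≤ n) :
    HasDerivChainOn s (deriv^[k] f) (deriv^[k + 1] f) (deriv^[k + 2] f) (deriv^[k + 3] f) :=
  ⟨fun _ => hf.hasDerivAt_iterate_deriv hs (lt_of_lt_of_le (by norm_cast; omega) hk),
    fun _ => hf.hasDerivAt_iterate_deriv hs (lt_of_lt_of_le (by norm_cast; omega) hk),
    fun _ => hf.hasDerivAt_iterate_deriv hs (lt_of_lt_of_le (by norm_cast; omega) hk)⟩

theorem hasDerivChainOn_half_sq {s : Set ℝ} {f f₁ f₂ f₃ : ℝ → ℝ}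
    (hf : HasDerivChainOn s f f₁ f₂ f₃) :
    HasDerivChainOn s (fun t => (1 / 2) * f t ^ 2) (fun t => f t * f₁ t)
      (fun t => f₁ t * f₁ t + f t * f₂ t) (fun t => f t * f₃ t + 3 * f₁ t * f₂ t) :=
  ⟨fun t ht => (((hf.first t ht).pow 2).const_mul (1 / 2)).congr_deriv (by norm_num; ring),
    fun t ht => (hf.first t ht).mul (hf.second t ht),
    fun t ht => (((hf.second t ht).mul (hf.second t ht)).add
      ((hf.first t ht).mul (hf.third t ht))).congr_deriv (by ring)⟩

theorem hasDerivChainOn_viscous {s : Set ℝ} {f f₁ f₂ f₃ f₄ : ℝ → ℝ}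
    (hf : ∀ t ∈ s, HasDerivAt f (f₁ t) t) (hf₁ : HasDerivChainOn s f₁ f₂ f₃ f₄) :
    HasDerivChainOn s (fun t => (1 - t ^ 2) * f₁ t + 2 * t * f t)
      (fun t => (1 - t ^ 2) * f₂ t + 2 * f t)
      (fun t => (1 - t ^ 2) * f₃ t - 2 * t * f₂ t + 2 * f₁ t)
      (fun t => (1 - t ^ 2) * f₄ t - 4 * t * f₃ t) := by
  have hw (t : ℝ) : HasDerivAt (fun t : ℝ => 1 - t ^ 2) (-(2 * t)) t := by
    simpa using (hasDerivAt_pow 2 t).const_sub 1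
  have hl (t : ℝ) : HasDerivAt (fun t : ℝ => 2 * t) 2 t := by
    simpa using (hasDerivAt_id t).const_mul 2
  refine ⟨fun t ht => ?_, fun t ht => ?_, fun t ht => ?_⟩
  · exact (((hw t).mul (hf₁.first t ht)).add ((hl t).mul (hf t ht))).congr_deriv (by ring)
  · exact (((hw t).mul (hf₁.second t ht)).add ((hf t ht).const_mul 2)).congr_deriv (by ring)
  · exact (((hw t).mul (hf₁.third t ht)).sub ((hl t).mul (hf₁.second t ht))).add
      ((hf₁.first t ht).const_mul 2) |>.congr_deriv (by ring)

/-- Slezkin's integrability reduction (equations (A.4)--(A.6)): a `C⁴` function `f` on an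
open interval satisfies `f f''' + 3 f' f'' = ν[(1-τ²) f'''' - 4τ f''']` iff
`(1/2)f² - ν[(1-τ²)f' + 2τf]` is a quadratic polynomial `C₀ + C₁τ + C₂τ²`; this rests on
the two key identities `(1/2)(f²)''' = f f''' + 3 f' f''` and
`((1-τ²)f' + 2τf)''' = (1-τ²)f'''' - 4τ f'''`. -/
theorem slezkin_reduction (a b ν : ℝ) (f : ℝ → ℝ)
    (hf : ContDiffOn ℝ 4 f (Set.Ioo a b)) :
    ((∀ τ ∈ Set.Ioo a b,
        f τ * deriv (deriv (deriv f)) τ + 3 * deriv f τ * deriv (deriv f) τ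
          = ν * ((1 - τ^2) * deriv (deriv (deriv (deriv f))) τ
              - 4 * τ * deriv (deriv (deriv f)) τ))
      ↔ ∃ C₀ C₁ C₂ : ℝ, ∀ τ ∈ Set.Ioo a b,
          (1/2) * (f τ)^2 - ν * ((1 - τ^2) * deriv f τ + 2 * τ * f τ)
            = C₀ + C₁ * τ + C₂ * τ^2)
    ∧ (∀ τ ∈ Set.Ioo a b,
        deriv (deriv (deriv (fun t => (1/2) * (f t)^2))) τ
          = f τ * deriv (deriv (deriv f)) τ + 3 * deriv f τ * deriv (deriv f) τ)
    ∧ (∀ τ ∈ Set.Ioo a b,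
        deriv (deriv (deriv (fun t => (1 - t^2) * deriv f t + 2 * t * f t))) τ
          = (1 - τ^2) * deriv (deriv (deriv (deriv f))) τ
            - 4 * τ * deriv (deriv (deriv f)) τ) := by
  have hs : IsOpen (Ioo a b) := isOpen_Ioo
  have hf₀ : HasDerivChainOn (Ioo a b) f (deriv f) (deriv (deriv f)) (deriv (deriv (deriv f))) :=
    hf.hasDerivChainOn_iterate_deriv hs (k := 0) (by norm_num)
  have hf₁ : HasDerivChainOn (Ioo a b) (deriv f) (deriv (deriv f)) (deriv (deriv (deriv f)))
      (deriv (deriv (deriv (deriv f)))) :=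
    hf.hasDerivChainOn_iterate_deriv hs (k := 1) (by norm_num)
  have hP := hasDerivChainOn_half_sq hf₀
  have hQ := hasDerivChainOn_viscous hf₀.first hf₁
  refine ⟨?_, hP.deriv_deriv_deriv hs, hQ.deriv_deriv_deriv hs⟩
  exact (forall₂_congr fun τ _ => sub_eq_zero.symm).trans
    ((hP.sub (hQ.const_mul ν)).third_eq_zero_iff_exists_quadratic hs isPreconnected_Ioo)
end
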